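/- arXiv:2103.00284 — 2 statements merged into one kernel-verified Lean document; each statement's English description precedes it below -/
import Mathlib

section
/- Let X ⊆ ℝ^m be a nonempty closed convex set, let x̃ ∈ ℝ^m, let x_P be the Euclidean orthogonal projection of x̃ onto X, and let ĝ ∈ ℝ^m. Define ℓ̃ : ℝ^m → ℝ by ℓ̃(z) = (1/2)(⟨ĝ, z⟩ + ‖ĝ‖ · dist(z, X)), where dist(z, X) is the Euclidean distance from z to X, and define g = (1/2)(ĝ + ‖ĝ‖ (x̃ − x_P)/‖x̃ − x_P‖) if x̃ ≠ x_P and g = (1/2) ĝ otherwise. Then ℓ̃ is convex, ‖g‖ ≤ ‖ĝ‖, and g is a subgradient of ℓ̃ at x̃, i.e. ℓ̃(z) ≥ ℓ̃(x̃) + ⟨g, z − x̃⟩ for all z ∈ ℝ^m. -/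
open scoped Classical
open scoped RealInnerProductSpace

lemma convexOn_infDist_aux {m : ℕ} (X : Set (EuclideanSpace ℝ (Fin m)))
    (hXne : X.Nonempty) (hXcl : IsClosed X) (hXconv : Convex ℝ X) :
    ConvexOn ℝ Set.univ (fun z => Metric.infDist z X) := by
  refine ⟨convex_univ, ?_⟩
  intro x _ y _ a b ha hb hab
  obtain ⟨p, hp, hxp⟩ := hXcl.exists_infDist_eq_dist hXne x
  obtain ⟨q, hq, hyq⟩ := hXcl.exists_infDist_eq_dist hXne y
  have hmem : a • p + b • q ∈ X := hXconv hp hq ha hb hab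
  calc Metric.infDist (a • x + b • y) X ≤ dist (a • x + b • y) (a • p + b • q) :=
        Metric.infDist_le_dist_of_mem hmem
    _ ≤ a * dist x p + b * dist y q := by
        rw [dist_eq_norm, dist_eq_norm, dist_eq_norm]
        have : a • x + b • y - (a • p + b • q) = a • (x - p) + b • (y - q) := by
          module
        rw [this]
        refine (norm_add_le _ _).trans ?_
        rw [norm_smul, norm_smul, Real.norm_of_nonneg ha, Real.norm_of_nonneg hb]
    _ = a * Metric.infDist x X + b * Metric.infDist y X := by rw [hxp, hyq]

/-- the surrogate loss `L̃(z) = (1/2)(⟨ĝ, z⟩ + ‖ĝ‖ dist(z, X))` is convex,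
the vector `g` built from `ĝ` and the projection residual has `‖g‖ ≤ ‖ĝ‖`, and `g` is a
subgradient of `L̃` at `x̃`. -/
theorem surrogate_convex_norm_subgradient {m : ℕ}
    (X : Set (EuclideanSpace ℝ (Fin m)))
    (hXne : X.Nonempty) (hXcl : IsClosed X) (hXconv : Convex ℝ X)
    (xt xP ghat : EuclideanSpace ℝ (Fin m))
    -- `xP` is the Euclidean orthogonal projection of `xt` onto `X`
    (hproj : xP ∈ X ∧ ∀ z ∈ X, ‖xt - xP‖ ≤ ‖xt - z‖)
    (L : EuclideanSpace ℝ (Fin m) → ℝ)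
    (hL : L = fun z => (2 : ℝ)⁻¹ * (⟪ghat, z⟫ + ‖ghat‖ * Metric.infDist z X))
    (g : EuclideanSpace ℝ (Fin m))
    (hg : g = if xt = xP then (2 : ℝ)⁻¹ • ghat
        else (2 : ℝ)⁻¹ • (ghat + (‖ghat‖ * ‖xt - xP‖⁻¹) • (xt - xP))) :
    ConvexOn ℝ Set.univ L ∧ ‖g‖ ≤ ‖ghat‖ ∧ ∀ z, L xt + ⟪g, z - xt⟫ ≤ L z := by
  obtain ⟨hxP, hmin⟩ := hproj
  -- infDist xt X = ‖xt - xP‖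
  have hdxt : Metric.infDist xt X = ‖xt - xP‖ := by
    apply le_antisymm
    · calc Metric.infDist xt X ≤ dist xt xP := Metric.infDist_le_dist_of_mem hxP
        _ = ‖xt - xP‖ := dist_eq_norm _ _
    · obtain ⟨q, hq, hxq⟩ := hXcl.exists_infDist_eq_dist hXne xt
      rw [hxq, dist_eq_norm]
      exact hmin q hq
  -- infDist nonneg and lower bound by inner-product computations
  have hconv : ConvexOn ℝ Set.univ L := by
    rw [hL]
    have h1 : ConvexOn ℝ Set.univ (fun z : EuclideanSpace ℝ (Fin m) => ⟪ghat, z⟫) := by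
      refine ⟨convex_univ, ?_⟩
      intro x _ y _ a b _ _ _
      simp [inner_add_right, inner_smul_right]
    have h2 := (convexOn_infDist_aux X hXne hXcl hXconv).smul (norm_nonneg ghat)
    have h3 := (h1.add h2).smul (by norm_num : (0:ℝ) ≤ (2:ℝ)⁻¹)
    convert h3 using 2 with z
    · rfl
    · rfl
    · simp [smul_eq_mul]
  refine ⟨hconv, ?_, ?_⟩
  · rw [hg]
    split_ifs with h
    · rw [norm_smul]
      simp only [norm_inv, Real.norm_ofNat]
      nlinarith [norm_nonneg ghat]
    · have hr : (0:ℝ) < ‖xt - xP‖ := by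
        rw [norm_pos_iff]
        intro hc
        exact h (by rwa [sub_eq_zero] at hc)
      rw [norm_smul]
      have hb : ‖ghat + (‖ghat‖ * ‖xt - xP‖⁻¹) • (xt - xP)‖ ≤ 2 * ‖ghat‖ := by
        refine (norm_add_le _ _).trans ?_
        rw [norm_smul, Real.norm_of_nonneg (by positivity)]
        rw [mul_assoc, inv_mul_cancel₀ hr.ne', mul_one]
        linarith
      simp only [norm_inv, Real.norm_ofNat]
      nlinarith
  · intro z
    rw [hL, hg]
    simp only
    -- need: ½⟪ĝ,xt⟫ + ½‖ĝ‖ d(xt) + ⟪g, z - xt⟫ ≤ ½⟪ĝ,z⟫ + ½‖ĝ‖ d(z)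
    split_ifs with h
    · rw [inner_smul_left]
      have hd0 : Metric.infDist xt X = 0 := by rw [hdxt, h]; simp
      have hdz : 0 ≤ Metric.infDist z X := Metric.infDist_nonneg
      have hiz : ⟪ghat, z - xt⟫ = ⟪ghat, z⟫ - ⟪ghat, xt⟫ := inner_sub_right _ _ _
      simp only [RCLike.star_def, starRingEnd_apply, star_trivial] at *
      rw [hiz, hd0]
      nlinarith [norm_nonneg ghat]
    · have hr : (0:ℝ) < ‖xt - xP‖ := by
        rw [norm_pos_iff]
        intro hc
        exact h (by rwa [sub_eq_zero] at hc)
      set r := ‖xt - xP‖ with hrdef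
      -- key: ⟪xt - xP, z - xP⟫ ≤ r * infDist z X
      obtain ⟨p, hp, hzp⟩ := hXcl.exists_infDist_eq_dist hXne z
      have hobtuse : ∀ w ∈ X, ⟪xt - xP, w - xP⟫ ≤ 0 := by
        haveI : Nonempty X := ⟨⟨xP, hxP⟩⟩
        have hinf : ‖xt - xP‖ = ⨅ w : X, ‖xt - w‖ := by
          apply le_antisymm
          · exact le_ciInf fun w => hmin w w.2
          · exact ciInf_le ⟨0, fun b ⟨w, hw⟩ => hw ▸ norm_nonneg _⟩ (⟨xP, hxP⟩ : X)
        exact (norm_eq_iInf_iff_real_inner_le_zero hXconv hxP).mp hinf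
      have hkey : ⟪xt - xP, z - xP⟫ ≤ r * Metric.infDist z X := by
        have h1 : ⟪xt - xP, z - xP⟫ = ⟪xt - xP, z - p⟫ + ⟪xt - xP, p - xP⟫ := by
          rw [← inner_add_right]
          congr 1
          abel
        have h2 : ⟪xt - xP, z - p⟫ ≤ r * ‖z - p‖ := by
          calc ⟪xt - xP, z - p⟫ ≤ ‖xt - xP‖ * ‖z - p‖ := real_inner_le_norm _ _
            _ = r * ‖z - p‖ := rfl
        have h3 := hobtuse p hp
        have : ‖z - p‖ = Metric.infDist z X := by rw [hzp, dist_eq_norm]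
        rw [h1, ← this]
        linarith
      rw [inner_smul_left, inner_add_left, inner_smul_left]
      simp only [RCLike.star_def, starRingEnd_apply, star_trivial]
      have hiz : ⟪ghat, z - xt⟫ = ⟪ghat, z⟫ - ⟪ghat, xt⟫ := inner_sub_right _ _ _
      have hiz2 : ⟪xt - xP, z - xt⟫ = ⟪xt - xP, z - xP⟫ - ⟪xt - xP, xt - xP⟫ := by
        rw [← inner_sub_right]
        congr 1
        abel
      have hself : ⟪xt - xP, xt - xP⟫ = r * r := by
        rw [real_inner_self_eq_norm_mul_norm]
      have hexp : ‖ghat‖ * r⁻¹ * ⟪xt - xP, z - xt⟫ ≤ ‖ghat‖ * Metric.infDist z X - ‖ghat‖ * r := by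
        rw [hiz2, hself]
        have hmono : r⁻¹ * ⟪xt - xP, z - xP⟫ ≤ Metric.infDist z X := by
          rw [inv_mul_eq_div, div_le_iff₀ hr]
          rw [mul_comm]
          exact hkey
        have hg0 : (0:ℝ) ≤ ‖ghat‖ := norm_nonneg _
        have : ‖ghat‖ * (r⁻¹ * ⟪xt - xP, z - xP⟫) ≤ ‖ghat‖ * Metric.infDist z X :=
          mul_le_mul_of_nonneg_left hmono hg0
        have hrr : r⁻¹ * (r * r) = r := by field_simp
        nlinarith [this]
      rw [hdxt]
      rw [hiz]
      linarith [hexp]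
end

section
/- Let X ⊆ ℝ^m be a nonempty closed convex set, let x̃ ∈ ℝ^m, let x_P be the Euclidean orthogonal projection of x̃ onto X, let ĝ ∈ ℝ^m, and define ℓ̃ : ℝ^m → ℝ by ℓ̃(z) = (1/2)(⟨ĝ, z⟩ + ‖ĝ‖ · dist(z, X)). Then for every x ∈ X one has ⟨ĝ, x_P − x⟩ ≤ 2(ℓ̃(x̃) − ℓ̃(x)). Consequently, if ℓ : ℝ^m → ℝ is convex and ĝ is a subgradient of ℓ at x_P, then ℓ(x_P) − ℓ(x) ≤ 2(ℓ̃(x̃) − ℓ̃(x)) for every x ∈ X. -/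
open scoped RealInnerProductSpace

open Metric

theorem Metric.infDist_eq_dist_of_forall_dist_le {α : Type*} [PseudoMetricSpace α] {s : Set α}
    {x y : α} (hy : y ∈ s) (hmin : ∀ z ∈ s, dist x y ≤ dist x z) :
    infDist x s = dist x y :=
  le_antisymm (infDist_le_dist_of_mem hy) ((le_infDist ⟨y, hy⟩).2 hmin)

section InnerProductSpace

variable {E : Type*} [NormedAddCommGroup E] [InnerProductSpace ℝ E]

noncomputable def surrogateLoss (X : Set E) (g z : E) : ℝ :=
  2⁻¹ * (⟪g, z⟫ + ‖g‖ * infDist z X)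

theorem two_mul_surrogateLoss_of_mem {X : Set E} (g : E) {x : E} (hx : x ∈ X) :
    2 * surrogateLoss X g x = ⟪g, x⟫ := by
  simp [surrogateLoss, infDist_zero_of_mem hx]

/-- By Cauchy–Schwarz the distance penalty `‖g‖ dist(xt, X)` absorbs `⟪g, xP - xt⟫`. -/
theorem inner_sub_le_two_mul_surrogateLoss_sub {X : Set E} {g xt xP x : E}
    (hxP : ‖xt - xP‖ ≤ infDist xt X) (hx : x ∈ X) :
    ⟪g, xP - x⟫ ≤ 2 * (surrogateLoss X g xt - surrogateLoss X g x) := by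
  have hcs : ⟪g, xP - xt⟫ ≤ ‖g‖ * infDist xt X :=
    calc ⟪g, xP - xt⟫ ≤ ‖g‖ * ‖xt - xP‖ := norm_sub_rev xt xP ▸ real_inner_le_norm g _
      _ ≤ ‖g‖ * infDist xt X := by gcongr
  have hsplit : ⟪g, xP - x⟫ = ⟪g, xP - xt⟫ + (⟪g, xt⟫ - ⟪g, x⟫) := by
    rw [← inner_sub_right, ← inner_add_right, sub_add_sub_cancel]
  rw [mul_sub, two_mul_surrogateLoss_of_mem g hx, hsplit, surrogateLoss]
  linarith

theorem sub_le_inner_of_subgradient {L : E → ℝ} {g y : E}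
    (hg : ∀ z, L y + ⟪g, z - y⟫ ≤ L z) (x : E) :
    L y - L x ≤ ⟪g, y - x⟫ := by
  have := hg x
  rw [← neg_sub, inner_neg_right] at this
  linarith

end InnerProductSpace

theorem surrogate_regret_reduction_general {m : ℕ}
    (X : Set (EuclideanSpace ℝ (Fin m)))
    (xt xP ghat : EuclideanSpace ℝ (Fin m))
    -- `xP` is the Euclidean orthogonal projection of `xt` onto `X`
    (hproj : xP ∈ X ∧ ∀ z ∈ X, ‖xt - xP‖ ≤ ‖xt - z‖)
    (Lt : EuclideanSpace ℝ (Fin m) → ℝ)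
    (hLt : Lt = fun z => (2 : ℝ)⁻¹ * (⟪ghat, z⟫ + ‖ghat‖ * Metric.infDist z X)) :
    (∀ x ∈ X, ⟪ghat, xP - x⟫ ≤ 2 * (Lt xt - Lt x)) ∧
      ∀ L : EuclideanSpace ℝ (Fin m) → ℝ, ConvexOn ℝ Set.univ L →
        (∀ z, L xP + ⟪ghat, z - xP⟫ ≤ L z) →
        ∀ x ∈ X, L xP - L x ≤ 2 * (Lt xt - Lt x) := by
  obtain ⟨hxP, hmin⟩ := hproj
  have hdist : infDist xt X = ‖xt - xP‖ := by
    simpa only [dist_eq_norm] using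
      infDist_eq_dist_of_forall_dist_le hxP (by simpa only [dist_eq_norm] using hmin)
  have key : ∀ x ∈ X, ⟪ghat, xP - x⟫ ≤ 2 * (Lt xt - Lt x) := fun x hx => by
    subst hLt
    exact inner_sub_le_two_mul_surrogateLoss_sub hdist.ge hx
  exact ⟨key, fun L _ hsub x hx => (sub_le_inner_of_subgradient hsub x).trans (key x hx)⟩

/-- for the surrogate loss `Lt(z) = (1/2)(⟨ĝ, z⟩ + ‖ĝ‖ dist(z, X))` one has
`⟨ĝ, xP − x⟩ ≤ 2 (Lt x̃ − Lt x)` for all `x ∈ X`; consequently, if `ĝ` is a subgradient at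
`xP` of a convex function `L`, then `L xP − L x ≤ 2 (Lt x̃ − Lt x)` for all `x ∈ X`. -/
theorem surrogate_regret_reduction {m : ℕ}
    (X : Set (EuclideanSpace ℝ (Fin m)))
    (hXne : X.Nonempty) (hXcl : IsClosed X) (hXconv : Convex ℝ X)
    (xt xP ghat : EuclideanSpace ℝ (Fin m))
    -- `xP` is the Euclidean orthogonal projection of `xt` onto `X`
    (hproj : xP ∈ X ∧ ∀ z ∈ X, ‖xt - xP‖ ≤ ‖xt - z‖)
    (Lt : EuclideanSpace ℝ (Fin m) → ℝ)
    (hLt : Lt = fun z => (2 : ℝ)⁻¹ * (⟪ghat, z⟫ + ‖ghat‖ * Metric.infDist z X)) :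
    (∀ x ∈ X, ⟪ghat, xP - x⟫ ≤ 2 * (Lt xt - Lt x)) ∧
      ∀ L : EuclideanSpace ℝ (Fin m) → ℝ, ConvexOn ℝ Set.univ L →
        (∀ z, L xP + ⟪ghat, z - xP⟫ ≤ L z) →
        ∀ x ∈ X, L xP - L x ≤ 2 * (Lt xt - Lt x) :=
  surrogate_regret_reduction_general X xt xP ghat hproj Lt hLt
end
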